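/- arXiv:2506.13946 — 2 statements merged into one kernel-verified Lean document; each statement's English description precedes it below -/
import Mathlib

section
/- Under the contraction assumption ℓ_F < 1, the map μ ↦ μP is a contraction on the space 𝒫(Z) of probability measures on Z with respect to the L¹-Wasserstein distance: W(μ₁P, μ₂P) ≤ ℓ_F · W(μ₁, μ₂) for all μ₁, μ₂ ∈ 𝒫(Z). -/
/-! The proof is the synchronous coupling: given a coupling `γ` of `μ₁` and `μ₂`, run both
chains with the same noise `ϑ ∼ ν`. The law of `(F z₁ ϑ, F z₂ ϑ)` couples `μ₁P` and `μ₂P`, and by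
the Lipschitz bound and independence of `ϑ` its cost is at most `ℓ_F` times the cost of `γ`.
Taking the infimum over `γ` gives the contraction. -/

open MeasureTheory

/-- The L¹-Wasserstein distance: infimum over couplings of the expected distance. -/
noncomputable def wassersteinDist {Z : Type*} [MeasurableSpace Z] [PseudoMetricSpace Z]
    (μ ν : Measure Z) : ℝ :=
  sInf { x | ∃ γ : Measure (Z × Z), IsProbabilityMeasure γ ∧ γ.fst = μ ∧ γ.snd = ν ∧
    x = ∫ p, dist p.1 p.2 ∂γ }

/-- One step of the chain: the law of `F z ϑ` when `z ∼ μ` and `ϑ ∼ ν` are independent. -/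
noncomputable def stepMeasure {Z Θ : Type*} [MeasurableSpace Z] [MeasurableSpace Θ]
    (F : Z → Θ → Z) (ν : Measure Θ) (μ : Measure Z) : Measure Z :=
  (μ.prod ν).map (fun p => F p.1 p.2)

section Wasserstein

variable {Z : Type*} [MeasurableSpace Z] [PseudoMetricSpace Z]

theorem wassersteinDist_le_integral_dist {μ₁ μ₂ : Measure Z} (γ : Measure (Z × Z))
    [IsProbabilityMeasure γ] (h₁ : γ.fst = μ₁) (h₂ : γ.snd = μ₂) :
    wassersteinDist μ₁ μ₂ ≤ ∫ p, dist p.1 p.2 ∂γ := by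
  refine csInf_le ⟨0, ?_⟩ ⟨γ, inferInstance, h₁, h₂, rfl⟩
  rintro _ ⟨κ, -, -, -, rfl⟩
  exact integral_nonneg fun _ => dist_nonneg

theorem le_mul_wassersteinDist {μ₁ μ₂ : Measure Z} [IsProbabilityMeasure μ₁]
    [IsProbabilityMeasure μ₂] {a c : ℝ} (hc : 0 ≤ c)
    (h : ∀ γ : Measure (Z × Z), IsProbabilityMeasure γ → γ.fst = μ₁ → γ.snd = μ₂ →
      a ≤ c * ∫ p, dist p.1 p.2 ∂γ) :
    a ≤ c * wassersteinDist μ₁ μ₂ := by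
  rw [wassersteinDist, ← smul_eq_mul, ← Real.sInf_smul_of_nonneg hc]
  refine le_csInf (Set.Nonempty.smul_set ⟨_, μ₁.prod μ₂, inferInstance, by simp, by simp, rfl⟩) ?_
  rintro _ ⟨_, ⟨γ, hγ, h₁, h₂, rfl⟩, rfl⟩
  exact h γ hγ h₁ h₂

end Wasserstein

section SynchronousCoupling

variable {Z Θ : Type*} [MeasurableSpace Z] [MeasurableSpace Θ]

noncomputable def synchronousCoupling (F : Z → Θ → Z) (ν : Measure Θ) (γ : Measure (Z × Z)) :
    Measure (Z × Z) :=
  (γ.prod ν).map fun p => (F p.1.1 p.2, F p.1.2 p.2)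

variable {F : Z → Θ → Z} {ν : Measure Θ} {γ : Measure (Z × Z)}

theorem Measurable.uncurry_comp_fst {W : Type*} [MeasurableSpace W]
    (hF : Measurable (Function.uncurry F)) {g : W → Z} (hg : Measurable g) :
    Measurable fun p : W × Θ => F (g p.1) p.2 :=
  hF.comp ((hg.comp measurable_fst).prodMk measurable_snd)

theorem measurable_synchronous (hF : Measurable (Function.uncurry F)) :
    Measurable fun p : (Z × Z) × Θ => (F p.1.1 p.2, F p.1.2 p.2) :=
  (hF.uncurry_comp_fst measurable_fst).prodMk (hF.uncurry_comp_fst measurable_snd)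

theorem isProbabilityMeasure_synchronousCoupling [IsProbabilityMeasure γ]
    [IsProbabilityMeasure ν] (hF : Measurable (Function.uncurry F)) :
    IsProbabilityMeasure (synchronousCoupling F ν γ) :=
  Measure.isProbabilityMeasure_map (measurable_synchronous hF).aemeasurable

theorem stepMeasure_map [SFinite ν] {W : Type*} [MeasurableSpace W] {μ : Measure W}
    [SFinite μ] (hF : Measurable (Function.uncurry F)) {g : W → Z} (hg : Measurable g) :
    stepMeasure F ν (μ.map g) = (μ.prod ν).map fun p => F (g p.1) p.2 := by
  rw [stepMeasure, ← Measure.map_id (μ := ν), Measure.map_prod_map μ ν hg measurable_id,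
    Measure.map_id, Measure.map_map (g := fun p : Z × Θ => F p.1 p.2) hF
    (hg.prodMap measurable_id)]
  rfl

theorem fst_synchronousCoupling [SFinite ν] [SFinite γ] (hF : Measurable (Function.uncurry F)) :
    (synchronousCoupling F ν γ).fst = stepMeasure F ν γ.fst := by
  rw [synchronousCoupling, Measure.fst_map_prodMk (hF.uncurry_comp_fst measurable_snd),
    Measure.fst, stepMeasure_map hF measurable_fst]

theorem snd_synchronousCoupling [SFinite ν] [SFinite γ] (hF : Measurable (Function.uncurry F)) :
    (synchronousCoupling F ν γ).snd = stepMeasure F ν γ.snd := by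
  rw [synchronousCoupling, Measure.snd_map_prodMk (hF.uncurry_comp_fst measurable_fst),
    Measure.snd, stepMeasure_map hF measurable_snd]

theorem integral_dist_synchronousCoupling_le [PseudoMetricSpace Z] [BorelSpace Z]
    [SecondCountableTopology Z] [SFinite ν] [SFinite γ] (hF : Measurable (Function.uncurry F))
    {ℓ : Θ → ℝ} (hlip : ∀ (z z' : Z) (θ : Θ), dist (F z θ) (F z' θ) ≤ ℓ θ * dist z z')
    (hγ : Integrable (fun p : Z × Z => dist p.1 p.2) γ) (hℓ : Integrable ℓ ν) :
    ∫ p, dist p.1 p.2 ∂(synchronousCoupling F ν γ)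
      ≤ (∫ θ, ℓ θ ∂ν) * ∫ p, dist p.1 p.2 ∂γ := by
  rw [synchronousCoupling, integral_map (measurable_synchronous hF).aemeasurable
    measurable_dist.aestronglyMeasurable]
  calc ∫ p : (Z × Z) × Θ, dist (F p.1.1 p.2) (F p.1.2 p.2) ∂(γ.prod ν)
      ≤ ∫ p : (Z × Z) × Θ, dist p.1.1 p.1.2 * ℓ p.2 ∂(γ.prod ν) :=
        integral_mono_of_nonneg (ae_of_all _ fun _ => dist_nonneg) (hγ.mul_prod hℓ)
          (ae_of_all _ fun p => (hlip _ _ _).trans_eq (mul_comm _ _))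
    _ = (∫ p, dist p.1 p.2 ∂γ) * ∫ θ, ℓ θ ∂ν :=
      integral_prod_mul (fun p : Z × Z => dist p.1 p.2) ℓ
    _ = (∫ θ, ℓ θ ∂ν) * ∫ p, dist p.1 p.2 ∂γ := mul_comm _ _

end SynchronousCoupling

theorem stmt2_general
    {Z Θ : Type*} [MeasurableSpace Z] [MetricSpace Z] [BorelSpace Z]
    [TopologicalSpace.SeparableSpace Z] [MeasurableSpace Θ]
    (hdbdd : ∀ z z' : Z, dist z z' ≤ 1)
    (F : Z → Θ → Z) (hF : Measurable (Function.uncurry F))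
    (ℓ : Θ → ℝ) (hℓnonneg : ∀ θ, 0 ≤ ℓ θ)
    (ν : Measure Θ) [IsProbabilityMeasure ν] (hℓint : Integrable ℓ ν)
    (ℓF : ℝ) (hℓF : ℓF = ∫ θ, ℓ θ ∂ν)
    (hlip : ∀ (z z' : Z) (θ : Θ), dist (F z θ) (F z' θ) ≤ ℓ θ * dist z z') :
    ∀ μ₁ μ₂ : Measure Z, IsProbabilityMeasure μ₁ → IsProbabilityMeasure μ₂ →
      wassersteinDist (stepMeasure F ν μ₁) (stepMeasure F ν μ₂)
        ≤ ℓF * wassersteinDist μ₁ μ₂ := by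
  intro μ₁ μ₂ _ _
  refine le_mul_wassersteinDist (hℓF ▸ integral_nonneg hℓnonneg) fun γ _ h₁ h₂ => ?_
  have hγ : Integrable (fun p : Z × Z => dist p.1 p.2) γ :=
    .of_bound measurable_dist.aestronglyMeasurable 1 <| ae_of_all _ fun p => by
      simpa only [Real.norm_eq_abs, abs_of_nonneg dist_nonneg] using hdbdd p.1 p.2
  have := isProbabilityMeasure_synchronousCoupling (ν := ν) (γ := γ) hF
  calc wassersteinDist (stepMeasure F ν μ₁) (stepMeasure F ν μ₂)
      ≤ ∫ p, dist p.1 p.2 ∂(synchronousCoupling F ν γ) :=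
        wassersteinDist_le_integral_dist _ (h₁ ▸ fst_synchronousCoupling hF)
          (h₂ ▸ snd_synchronousCoupling hF)
    _ ≤ ℓF * ∫ p, dist p.1 p.2 ∂γ := hℓF ▸ integral_dist_synchronousCoupling_le hF hlip hγ hℓint

/-- under the contraction assumption `ℓ_F < 1`, the map `μ ↦ μP` is a
contraction on probability measures with respect to the L¹-Wasserstein distance. -/
theorem stmt2
    {Z Θ : Type*} [MeasurableSpace Z] [MetricSpace Z] [BorelSpace Z]
    [CompleteSpace Z] [TopologicalSpace.SeparableSpace Z] [MeasurableSpace Θ]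
    (hdbdd : ∀ z z' : Z, dist z z' ≤ 1)
    (F : Z → Θ → Z) (hF : Measurable (Function.uncurry F))
    (ℓ : Θ → ℝ) (hℓmeas : Measurable ℓ) (hℓnonneg : ∀ θ, 0 ≤ ℓ θ)
    (ν : Measure Θ) [IsProbabilityMeasure ν] (hℓint : Integrable ℓ ν)
    (ℓF : ℝ) (hℓF : ℓF = ∫ θ, ℓ θ ∂ν) (hcontr : ℓF < 1)
    (hlip : ∀ (z z' : Z) (θ : Θ), dist (F z θ) (F z' θ) ≤ ℓ θ * dist z z') :
    ∀ μ₁ μ₂ : Measure Z, IsProbabilityMeasure μ₁ → IsProbabilityMeasure μ₂ →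
      wassersteinDist (stepMeasure F ν μ₁) (stepMeasure F ν μ₂)
        ≤ ℓF * wassersteinDist μ₁ μ₂ :=
  stmt2_general hdbdd F hF ℓ hℓnonneg ν hℓint ℓF hℓF hlip
end

section
/- Under assumptions (A1) and (A2), the function z ↦ E^z[φ(Z₀,…,Z_{n−1})], where φ(z₁,…,zₙ) = sup_{h∈ℋ}|(1/n)∑ᵢℒ_h(zᵢ) − π(ℒ_h)|, is Lipschitz on Z with Lipschitz constant at most ℓ_ℋ. -/
/-!
Run the chains started at `z` and `z'` with the same innovations. After `i` steps they are at
distance at most `ℓ(ϑ₀)⋯ℓ(ϑᵢ₋₁) d(z, z')`, whose expectation is `ℓ_F^i d(z, z') ≤ d(z, z')` by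
independence. Since every `ℒ_h` is `ℓ_ℋ`-Lipschitz, `φ` moves by at most `ℓ_ℋ` times the average
distance between the two paths, uniformly in `h`; taking expectations gives the bound.
-/

open MeasureTheory ProbabilityTheory Finset

lemma abs_iSup_sub_iSup_le {ι : Type*} {f g : ι → ℝ} {c : ℝ} (hf : BddAbove (Set.range f))
    (hg : BddAbove (Set.range g)) (hc : 0 ≤ c) (hfg : ∀ i, |f i - g i| ≤ c) :
    |(⨆ i, f i) - ⨆ i, g i| ≤ c := by
  cases isEmpty_or_nonempty ι
  · simpa using hc
  rw [abs_sub_le_iff, sub_le_iff_le_add, sub_le_iff_le_add]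
  constructor
  · exact ciSup_le fun i => by linarith [(abs_sub_le_iff.mp (hfg i)).1, le_ciSup hg i]
  · exact ciSup_le fun i => by linarith [(abs_sub_le_iff.mp (hfg i)).2, le_ciSup hf i]

lemma one_div_mul_sum_le {n : ℕ} {a : Fin n → ℝ} {M : ℝ} (hM : 0 ≤ M) (ha : ∀ i, a i ≤ M) :
    1 / (n : ℝ) * ∑ i, a i ≤ M := by
  rw [one_div_mul_eq_div]
  refine div_le_of_le_mul₀ n.cast_nonneg hM ?_
  simpa [mul_comm] using sum_le_sum fun i (_ : i ∈ univ) => ha i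

lemma integral_mem_Icc_zero {α : Type*} [MeasurableSpace α] {μ : Measure α}
    [IsProbabilityMeasure μ] {f : α → ℝ} {M : ℝ} (hf : ∀ x, f x ∈ Set.Icc 0 M) :
    ∫ x, f x ∂μ ∈ Set.Icc 0 M := by
  have hnorm := norm_integral_le_of_norm_le_const (μ := μ) (.of_forall fun x =>
    (Real.norm_of_nonneg (hf x).1).trans_le (hf x).2)
  rw [probReal_univ, mul_one, Real.norm_eq_abs] at hnorm
  exact ⟨integral_nonneg fun x => (hf x).1, (le_abs_self _).trans hnorm⟩

section EmpiricalDeviation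

variable {Z H : Type*} {n : ℕ}

noncomputable def empiricalDeviation (L : H → Z → ℝ) (m : H → ℝ) (u : Fin n → Z) : ℝ :=
  ⨆ h, |1 / (n : ℝ) * ∑ i, L h (u i) - m h|

variable {L : H → Z → ℝ} {m : H → ℝ} {M : ℝ}

lemma abs_empiricalMean_sub_le (hM : 0 ≤ M) (hL : ∀ h z, L h z ∈ Set.Icc 0 M)
    (hm : ∀ h, m h ∈ Set.Icc 0 M) (h : H) (u : Fin n → Z) :
    |1 / (n : ℝ) * ∑ i, L h (u i) - m h| ≤ M := by
  have hmean_nonneg : 0 ≤ 1 / (n : ℝ) * ∑ i, L h (u i) :=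
    mul_nonneg (by positivity) (sum_nonneg fun i _ => (hL h (u i)).1)
  have hmean_le : 1 / (n : ℝ) * ∑ i, L h (u i) ≤ M := one_div_mul_sum_le hM fun i => (hL h (u i)).2
  rw [abs_sub_le_iff]
  constructor <;> linarith [(hm h).1, (hm h).2]

lemma bddAbove_range_abs_empiricalMean_sub (hM : 0 ≤ M) (hL : ∀ h z, L h z ∈ Set.Icc 0 M)
    (hm : ∀ h, m h ∈ Set.Icc 0 M) (u : Fin n → Z) :
    BddAbove (Set.range fun h => |1 / (n : ℝ) * ∑ i, L h (u i) - m h|) :=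
  ⟨M, Set.forall_mem_range.2 fun h => abs_empiricalMean_sub_le hM hL hm h u⟩

lemma abs_empiricalDeviation_le (hM : 0 ≤ M) (hL : ∀ h z, L h z ∈ Set.Icc 0 M)
    (hm : ∀ h, m h ∈ Set.Icc 0 M) (u : Fin n → Z) : |empiricalDeviation L m u| ≤ M := by
  unfold empiricalDeviation
  rw [abs_of_nonneg (Real.iSup_nonneg fun _ => abs_nonneg _)]
  exact Real.iSup_le (fun h => abs_empiricalMean_sub_le hM hL hm h u) hM

variable [PseudoMetricSpace Z] {K : ℝ}

lemma abs_empiricalDeviation_sub_le (hM : 0 ≤ M) (hL : ∀ h z, L h z ∈ Set.Icc 0 M)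
    (hm : ∀ h, m h ∈ Set.Icc 0 M) (hK : 0 ≤ K)
    (hLlip : ∀ h z z', |L h z - L h z'| ≤ K * dist z z') (u v : Fin n → Z) :
    |empiricalDeviation L m u - empiricalDeviation L m v|
      ≤ 1 / (n : ℝ) * ∑ i, K * dist (u i) (v i) := by
  refine abs_iSup_sub_iSup_le (bddAbove_range_abs_empiricalMean_sub hM hL hm u)
    (bddAbove_range_abs_empiricalMean_sub hM hL hm v) (by positivity) fun h => ?_
  calc _ ≤ |1 / (n : ℝ) * ∑ i, L h (u i) - m h - (1 / (n : ℝ) * ∑ i, L h (v i) - m h)| :=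
        abs_abs_sub_abs_le_abs_sub _ _
    _ = 1 / (n : ℝ) * |∑ i, (L h (u i) - L h (v i))| := by
        rw [sub_sub_sub_cancel_right, ← mul_sub, ← sum_sub_distrib, abs_mul,
          abs_of_nonneg (by positivity)]
    _ ≤ 1 / (n : ℝ) * ∑ i, K * dist (u i) (v i) := by
        gcongr
        exact (abs_sum_le_sum_abs _ _).trans (sum_le_sum fun i _ => hLlip h _ _)

lemma continuous_empiricalDeviation (hM : 0 ≤ M) (hL : ∀ h z, L h z ∈ Set.Icc 0 M)
    (hm : ∀ h, m h ∈ Set.Icc 0 M) (hK : 0 ≤ K)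
    (hLlip : ∀ h z z', |L h z - L h z'| ≤ K * dist z z') :
    Continuous (empiricalDeviation (n := n) L m) := by
  refine (LipschitzWith.of_dist_le_mul (K := K.toNNReal) fun u v => ?_).continuous
  rw [Real.dist_eq, Real.coe_toNNReal _ hK]
  refine (abs_empiricalDeviation_sub_le hM hL hm hK hLlip u v).trans ?_
  exact one_div_mul_sum_le (by positivity) fun i => by gcongr; exact dist_le_pi_dist u v i

end EmpiricalDeviation

lemma ProbabilityTheory.iIndepFun.integrable_prod_range {Ω : Type*} [MeasurableSpace Ω]
    {P : Measure Ω} {Y : ℕ → Ω → ℝ} (hY : iIndepFun Y P) (hmeas : ∀ j, Measurable (Y j))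
    (hint : ∀ j, Integrable (Y j) P) (i : ℕ) :
    Integrable (fun ω => ∏ j ∈ range i, Y j ω) P := by
  have := hY.isProbabilityMeasure
  induction i with
  | zero => simp
  | succ k ih =>
    have hindep := hY.indepFun_prod_range_succ hmeas k
    rw [prod_fn] at hindep
    simp_rw [prod_range_succ]
    exact hindep.integrable_mul ih (hint k)

lemma ProbabilityTheory.iIndepFun.integral_prod_range {Ω : Type*} [MeasurableSpace Ω]
    {P : Measure Ω} {Y : ℕ → Ω → ℝ} (hY : iIndepFun Y P) (hmeas : ∀ j, Measurable (Y j))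
    (i : ℕ) : ∫ ω, ∏ j ∈ range i, Y j ω ∂P = ∏ j ∈ range i, ∫ ω, Y j ω ∂P := by
  have := (hY.precomp (Fin.val_injective (n := i))).integral_fun_prod_eq_prod_integral
    fun j => (hmeas j).aestronglyMeasurable
  simp_rw [← fun ω => Fin.prod_univ_eq_prod_range (Y · ω) i, ← Fin.prod_univ_eq_prod_range]
  exact this

section IteratedRandomFunction

variable {Ω Z Θ : Type*}

def IsIteratedRandomFunction (F : Z → Θ → Z) (ϑ : ℕ → Ω → Θ) (X : ℕ → Ω → Z) : Prop :=
  ∀ k ω, X (k + 1) ω = F (X k ω) (ϑ k ω)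

variable {F : Z → Θ → Z} {ϑ : ℕ → Ω → Θ} {X X' : ℕ → Ω → Z}

lemma IsIteratedRandomFunction.dist_le_prod_mul [PseudoMetricSpace Z] {ℓ : Θ → ℝ}
    (hℓ : ∀ θ, 0 ≤ ℓ θ) (hlip : ∀ z z' θ, dist (F z θ) (F z' θ) ≤ ℓ θ * dist z z')
    (hX : IsIteratedRandomFunction F ϑ X) (hX' : IsIteratedRandomFunction F ϑ X') (i : ℕ)
    (ω : Ω) : dist (X i ω) (X' i ω) ≤ (∏ j ∈ range i, ℓ (ϑ j ω)) * dist (X 0 ω) (X' 0 ω) := by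
  induction i with
  | zero => simp
  | succ k ih =>
    rw [hX, hX', prod_range_succ, mul_comm _ (ℓ _), mul_assoc]
    exact (hlip _ _ _).trans (mul_le_mul_of_nonneg_left ih (hℓ _))

variable [MeasurableSpace Ω] [MeasurableSpace Θ] {P : Measure Ω} {ν : Measure Θ} {ℓ : Θ → ℝ}

lemma ProbabilityTheory.iIndepFun.integrable_prod_range_comp (hϑ : iIndepFun ϑ P)
    (hϑmeas : ∀ j, Measurable (ϑ j)) (hϑlaw : ∀ j, P.map (ϑ j) = ν) (hℓmeas : Measurable ℓ)
    (hℓint : Integrable ℓ ν) (i : ℕ) : Integrable (fun ω => ∏ j ∈ range i, ℓ (ϑ j ω)) P := by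
  refine (hϑ.comp (fun _ => ℓ) fun _ => hℓmeas).integrable_prod_range
    (fun j => hℓmeas.comp (hϑmeas j)) (fun j => ?_) i
  rw [← hϑlaw j] at hℓint
  exact (integrable_map_measure hℓmeas.aestronglyMeasurable (hϑmeas j).aemeasurable).mp hℓint

lemma ProbabilityTheory.iIndepFun.integral_prod_range_comp (hϑ : iIndepFun ϑ P)
    (hϑmeas : ∀ j, Measurable (ϑ j)) (hϑlaw : ∀ j, P.map (ϑ j) = ν) (hℓmeas : Measurable ℓ)
    (i : ℕ) : ∫ ω, ∏ j ∈ range i, ℓ (ϑ j ω) ∂P = (∫ θ, ℓ θ ∂ν) ^ i := by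
  refine ((hϑ.comp (fun _ => ℓ) fun _ => hℓmeas).integral_prod_range
    (fun j => hℓmeas.comp (hϑmeas j)) i).trans ?_
  have hlaw : ∀ j, ∫ ω, (ℓ ∘ ϑ j) ω ∂P = ∫ θ, ℓ θ ∂ν := fun j => by
    rw [← hϑlaw j, integral_map (hϑmeas j).aemeasurable hℓmeas.aestronglyMeasurable]
    rfl
  simp only [hlaw, prod_const, card_range]

lemma IsIteratedRandomFunction.measurable [MeasurableSpace Z]
    (hX : IsIteratedRandomFunction F ϑ X) (hF : Measurable (Function.uncurry F))
    (hϑmeas : ∀ k, Measurable (ϑ k)) (hX0 : Measurable (X 0)) (i : ℕ) : Measurable (X i) := by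
  induction i with
  | zero => exact hX0
  | succ k ih =>
    rw [show X (k + 1) = fun ω => Function.uncurry F (X k ω, ϑ k ω) from funext (hX k)]
    exact hF.comp (ih.prodMk (hϑmeas k))

end IteratedRandomFunction

lemma abs_integral_empiricalDeviation_sub_le {Ω Z H : Type*} [MeasurableSpace Ω]
    [PseudoMetricSpace Z] [SecondCountableTopology Z] [MeasurableSpace Z] [BorelSpace Z]
    {P : Measure Ω} [IsFiniteMeasure P] {L : H → Z → ℝ} {m : H → ℝ} {M K D : ℝ} {n : ℕ}
    (hM : 0 ≤ M) (hL : ∀ h z, L h z ∈ Set.Icc 0 M) (hm : ∀ h, m h ∈ Set.Icc 0 M) (hK : 0 ≤ K)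
    (hLlip : ∀ h z z', |L h z - L h z'| ≤ K * dist z z') {U V : ℕ → Ω → Z}
    (hU : ∀ i, Measurable (U i)) (hV : ∀ i, Measurable (V i))
    (hint : ∀ i, Integrable (fun ω => dist (U i ω) (V i ω)) P)
    (hD : ∀ i, ∫ ω, dist (U i ω) (V i ω) ∂P ≤ D) :
    |∫ ω, empiricalDeviation L m (fun i : Fin n => U i ω) ∂P
      - ∫ ω, empiricalDeviation L m (fun i : Fin n => V i ω) ∂P| ≤ K * D := by
  have hφint : ∀ W : ℕ → Ω → Z, (∀ i, Measurable (W i)) →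
      Integrable (fun ω => empiricalDeviation L m (fun i : Fin n => W i ω)) P := fun W hW =>
    .of_bound ((continuous_empiricalDeviation hM hL hm hK hLlip).measurable.comp
      (measurable_pi_lambda _ fun i => hW i)).aestronglyMeasurable M
      (.of_forall fun ω => abs_empiricalDeviation_le hM hL hm _)
  have hD0 : 0 ≤ D := (integral_nonneg fun _ => dist_nonneg).trans (hD 0)
  rw [← integral_sub (hφint U hU) (hφint V hV)]
  calc _ ≤ ∫ ω, |empiricalDeviation L m (fun i : Fin n => U i ω)
          - empiricalDeviation L m (fun i : Fin n => V i ω)| ∂P :=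
        abs_integral_le_integral_abs
    _ ≤ ∫ ω, 1 / (n : ℝ) * ∑ i : Fin n, K * dist (U i ω) (V i ω) ∂P :=
        integral_mono ((hφint U hU).sub (hφint V hV)).abs
          ((integrable_finsetSum _ fun (i : Fin n) _ => (hint i).const_mul K).const_mul _)
          fun ω => abs_empiricalDeviation_sub_le hM hL hm hK hLlip _ _
    _ = 1 / (n : ℝ) * ∑ i : Fin n, K * ∫ ω, dist (U i ω) (V i ω) ∂P := by
        rw [integral_const_mul, integral_finsetSum _ fun (i : Fin n) _ => (hint i).const_mul K]
        simp only [integral_const_mul]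
    _ ≤ K * D :=
        one_div_mul_sum_le (mul_nonneg hK hD0) fun i => mul_le_mul_of_nonneg_left (hD i) hK

theorem stmt6_general
    {Ω Z Θ H : Type*} [MeasurableSpace Ω] [MeasurableSpace Z] [MetricSpace Z]
    [BorelSpace Z] [TopologicalSpace.SeparableSpace Z]
    [MeasurableSpace Θ]
    (P : Measure Ω) [IsProbabilityMeasure P]
    -- the governing function and assumption (A1)
    (F : Z → Θ → Z) (hF : Measurable (Function.uncurry F))
    (ℓ : Θ → ℝ) (hℓmeas : Measurable ℓ) (hℓnonneg : ∀ θ, 0 ≤ ℓ θ)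
    (ν : Measure Θ) (hℓint : Integrable ℓ ν)
    (ℓF : ℝ) (hℓF : ℓF = ∫ θ, ℓ θ ∂ν) (hcontr : ℓF < 1)
    (hlip : ∀ (z z' : Z) (θ : Θ), dist (F z θ) (F z' θ) ≤ ℓ θ * dist z z')
    -- the i.i.d. innovations ϑ₀, ϑ₁, …, with common law ν
    (ϑ : ℕ → Ω → Θ) (hϑmeas : ∀ i, Measurable (ϑ i))
    (hϑlaw : ∀ i, P.map (ϑ i) = ν)
    (hϑindep : iIndepFun ϑ P)
    -- the chain started at the deterministic point `z`
    (itr : Z → ℕ → Ω → Z) (hitr0 : ∀ z ω, itr z 0 ω = z)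
    (hitrrec : ∀ z k ω, itr z (k + 1) ω = F (itr z k ω) (ϑ k ω))
    -- the invariant probability measure π
    (π : Measure Z) [IsProbabilityMeasure π]
    -- assumption (A2) on the losses
    (L : H → Z → ℝ) (ℓH : ℝ) (hℓHpos : 0 < ℓH)
    (hLbdd : ∀ h z, L h z ∈ Set.Icc 0 ℓH)
    (hLlip : ∀ h z z', |L h z - L h z'| ≤ ℓH * dist z z')
    (n : ℕ)
    -- `g z = E^z[φ(Z₀,…,Z_{n−1})]`
    (g : Z → ℝ)
    (hg : ∀ z, g z = ∫ ω, (⨆ h : H,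
      |(1 / (n : ℝ)) * ∑ i ∈ range n, L h (itr z i ω) - ∫ w, L h w ∂π|) ∂P) :
    ∀ z z' : Z, |g z - g z'| ≤ ℓH * dist z z' := by
  intro z z'
  have hg' : ∀ z, g z = ∫ ω, empiricalDeviation L (fun h => ∫ w, L h w ∂π)
      (fun i : Fin n => itr z i ω) ∂P := fun z => by
    simp_rw [hg, empiricalDeviation, ← fun h ω => Fin.sum_univ_eq_sum_range (L h <| itr z · ω) n]
  have hchain : ∀ z, IsIteratedRandomFunction F ϑ (itr z) := hitrrec
  have hmeas : ∀ z i, Measurable (itr z i) := fun z => (hchain z).measurable hF hϑmeas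
    (by simp_rw [funext (hitr0 z)]; exact measurable_const)
  have hdist : ∀ i ω, dist (itr z i ω) (itr z' i ω) ≤ (∏ j ∈ range i, ℓ (ϑ j ω)) * dist z z' :=
    fun i ω => by simpa [hitr0] using (hchain z).dist_le_prod_mul hℓnonneg hlip (hchain z') i ω
  have hprod := hϑindep.integrable_prod_range_comp hϑmeas hϑlaw hℓmeas hℓint
  rw [hg', hg']
  refine abs_integral_empiricalDeviation_sub_le hℓHpos.le hLbdd
    (fun h => integral_mem_Icc_zero (hLbdd h)) hℓHpos.le hLlip
    (hmeas z) (hmeas z') (fun i => ?_) fun i => ?_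
  · exact ((hprod i).mul_const _).mono' ((hmeas z i).dist (hmeas z' i)).aestronglyMeasurable
      (.of_forall fun ω => (abs_of_nonneg dist_nonneg).trans_le (hdist i ω))
  · calc _ ≤ ∫ ω, (∏ j ∈ range i, ℓ (ϑ j ω)) * dist z z' ∂P := integral_mono_of_nonneg
          (.of_forall fun _ => dist_nonneg) ((hprod i).mul_const _) (.of_forall (hdist i))
      _ = ℓF ^ i * dist z z' := by
        rw [integral_mul_const, hϑindep.integral_prod_range_comp hϑmeas hϑlaw hℓmeas, hℓF]
      _ ≤ dist z z' := mul_le_of_le_one_left dist_nonneg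
        (pow_le_one₀ (hℓF ▸ integral_nonneg hℓnonneg) hcontr.le)

/-- under (A1) and (A2) the map `z ↦ E^z[φ(Z₀,…,Z_{n−1})]`, where
`φ(z₁,…,zₙ) = sup_h |(1/n)∑ᵢ ℒ_h(zᵢ) − π(ℒ_h)|` and the chain starts at the deterministic
point `z`, is Lipschitz with constant at most `ℓ_ℋ`. -/
theorem stmt6
    {Ω Z Θ H : Type*} [MeasurableSpace Ω] [MeasurableSpace Z] [MetricSpace Z]
    [BorelSpace Z] [CompleteSpace Z] [TopologicalSpace.SeparableSpace Z]
    [MeasurableSpace Θ] [Nonempty H]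
    (P : Measure Ω) [IsProbabilityMeasure P]
    (hdbdd : ∀ z z' : Z, dist z z' ≤ 1)
    -- the governing function and assumption (A1)
    (F : Z → Θ → Z) (hF : Measurable (Function.uncurry F))
    (ℓ : Θ → ℝ) (hℓmeas : Measurable ℓ) (hℓnonneg : ∀ θ, 0 ≤ ℓ θ)
    (ν : Measure Θ) [IsProbabilityMeasure ν] (hℓint : Integrable ℓ ν)
    (ℓF : ℝ) (hℓF : ℓF = ∫ θ, ℓ θ ∂ν) (hcontr : ℓF < 1)
    (hlip : ∀ (z z' : Z) (θ : Θ), dist (F z θ) (F z' θ) ≤ ℓ θ * dist z z')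
    -- the i.i.d. innovations ϑ₀, ϑ₁, …, with common law ν
    (ϑ : ℕ → Ω → Θ) (hϑmeas : ∀ i, Measurable (ϑ i))
    (hϑlaw : ∀ i, P.map (ϑ i) = ν)
    (hϑindep : iIndepFun ϑ P)
    -- the chain started at the deterministic point `z`
    (itr : Z → ℕ → Ω → Z) (hitr0 : ∀ z ω, itr z 0 ω = z)
    (hitrrec : ∀ z k ω, itr z (k + 1) ω = F (itr z k ω) (ϑ k ω))
    -- the invariant probability measure π
    (π : Measure Z) [IsProbabilityMeasure π] (hπinv : stepMeasure F ν π = π)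
    -- assumption (A2) on the losses
    (L : H → Z → ℝ) (ℓH : ℝ) (hℓHpos : 0 < ℓH)
    (hLmeas : ∀ h, Measurable (L h))
    (hLbdd : ∀ h z, L h z ∈ Set.Icc 0 ℓH)
    (hLlip : ∀ h z z', |L h z - L h z'| ≤ ℓH * dist z z')
    (n : ℕ) (hn : 0 < n)
    -- `g z = E^z[φ(Z₀,…,Z_{n−1})]`
    (g : Z → ℝ)
    (hg : ∀ z, g z = ∫ ω, (⨆ h : H,
      |(1 / (n : ℝ)) * ∑ i ∈ range n, L h (itr z i ω) - ∫ w, L h w ∂π|) ∂P) :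
    ∀ z z' : Z, |g z - g z'| ≤ ℓH * dist z z' :=
  stmt6_general P F hF ℓ hℓmeas hℓnonneg ν hℓint ℓF hℓF hcontr hlip ϑ hϑmeas hϑlaw hϑindep itr hitr0
    hitrrec π L ℓH hℓHpos hLbdd hLlip n g hg
end
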